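/- Let gamma >= 1, J_0 > 0, b_0 > 0, and let u_s = J_0 / (J_0^2/gamma)^{1/(gamma+1)}. Suppose (u, E) : [0, T] -> R^2 is a C^1 solution of the ODE system u' = u^gamma E / (u^{gamma+1} - gamma J_0^{gamma-1}), E' = J_0/u - b_0, with u(x_1) > u_s for all x_1 in [0, T]. Then the quantity (1/2) E(x_1)^2 - H(u(x_1)) is constant on [0, T], where H(u) = integral from u_s to u of (b_0/t^{gamma+1}) (t^{gamma+1} - u_s^{gamma+1}) (J_0/b_0 - t) dt. -/

import Mathlib

open Real MeasureTheory intervalIntegral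

/-!
Along a solution, `(E²/2)' = E E' = E (J₀/u - b₀)` and `H(u)' = H'(u) u'`. Since
`u_s^{γ+1} = γ J₀^{γ-1}`, the factor `t^{γ+1} - u_s^{γ+1}` in the integrand of `H` cancels the
sonic denominator of `u'`, and what is left is again `E (J₀/u - b₀)`; so the derivative of
`E²/2 - H(u)` vanishes. Supersonicity keeps `u` positive and away from the sonic point, where
both the cancellation and the fundamental theorem of calculus for `H` apply.
-/

namespace EulerPoisson

theorem sonic_speed_rpow {γ J₀ : ℝ} (hγ : 0 < γ) (hJ : 0 < J₀) :
    (J₀ / (J₀ ^ 2 / γ) ^ (1 / (γ + 1))) ^ (γ + 1) = γ * J₀ ^ (γ - 1) := by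
  have hγ1 : γ + 1 ≠ 0 := by linarith
  have hsq : J₀ ^ (γ + 1) = J₀ ^ (γ - 1) * J₀ ^ 2 := by
    rw [← rpow_natCast, ← rpow_add hJ]
    norm_num [sub_add]
  rw [div_rpow hJ.le (by positivity), ← rpow_mul (by positivity), one_div_mul_cancel hγ1,
    rpow_one, hsq]
  field_simp

theorem hasDerivAt_integral_of_continuousOn {f : ℝ → ℝ} {s : Set ℝ} {a v : ℝ}
    (hs : IsOpen s) [s.OrdConnected] (hf : ContinuousOn f s) (ha : a ∈ s) (hv : v ∈ s) :
    HasDerivAt (fun w => ∫ t in a..w, f t) (f v) v :=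
  integral_hasDerivAt_right ((hf.mono (‹s.OrdConnected›.uIcc_subset ha hv)).intervalIntegrable)
    (hf.stronglyMeasurableAtFilter hs v hv) (hf.continuousAt (hs.mem_nhds hv))

theorem continuousOn_potential_integrand (γ J₀ b₀ c : ℝ) (hγ : -1 ≤ γ) :
    ContinuousOn (fun t : ℝ => b₀ / t ^ (γ + 1) * (t ^ (γ + 1) - c) * (J₀ / b₀ - t))
      (Set.Ioi 0) := by
  have hp : Continuous fun t : ℝ => t ^ (γ + 1) := continuous_rpow_const (by linarith)
  refine ((continuousOn_const.div hp.continuousOn fun t ht => ?_).mul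
    (hp.continuousOn.sub continuousOn_const)).mul (continuousOn_const.sub continuousOn_id)
  exact (rpow_pos_of_pos ht _).ne'

theorem potential_integrand_mul_flow {γ J₀ b₀ c u e : ℝ} (hb : b₀ ≠ 0) (hu : 0 < u)
    (hc : u ^ (γ + 1) ≠ c) :
    b₀ / u ^ (γ + 1) * (u ^ (γ + 1) - c) * (J₀ / b₀ - u) * (u ^ γ * e / (u ^ (γ + 1) - c)) =
      e * (J₀ / u - b₀) := by
  have hc' : u ^ (γ + 1) - c ≠ 0 := sub_ne_zero.2 hc
  rw [rpow_add hu, rpow_one] at hc' ⊢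
  have := (rpow_pos_of_pos hu γ).ne'
  field_simp

end EulerPoisson

theorem euler_poisson_first_integral_general (γ J₀ b₀ T : ℝ) (hγ : 1 ≤ γ) (hJ : 0 < J₀)
    (hb : 0 < b₀)
    (us : ℝ) (hus : us = J₀ / (J₀ ^ 2 / γ) ^ (1 / (γ + 1)))
    (H : ℝ → ℝ)
    (hH : ∀ v : ℝ, H v =
      ∫ t in us..v, (b₀ / t ^ (γ + 1)) * (t ^ (γ + 1) - us ^ (γ + 1)) * (J₀ / b₀ - t))
    (u E : ℝ → ℝ)
    (hu' : ∀ x ∈ Set.Icc 0 T,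
      HasDerivWithinAt u ((u x) ^ γ * E x / ((u x) ^ (γ + 1) - γ * J₀ ^ (γ - 1)))
        (Set.Icc 0 T) x)
    (hE' : ∀ x ∈ Set.Icc 0 T,
      HasDerivWithinAt E (J₀ / u x - b₀) (Set.Icc 0 T) x)
    (hsup : ∀ x ∈ Set.Icc 0 T, us < u x) :
    ∀ x ∈ Set.Icc (0 : ℝ) T,
      (1 / 2) * (E x) ^ 2 - H (u x) = (1 / 2) * (E 0) ^ 2 - H (u 0) := by
  have hγ0 : 0 < γ := by linarith
  have hus0 : 0 < us := hus ▸ by positivity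
  have hsonic : us ^ (γ + 1) = γ * J₀ ^ (γ - 1) := hus ▸ EulerPoisson.sonic_speed_rpow hγ0 hJ
  have hH' : ∀ v, 0 < v → HasDerivAt H
      (b₀ / v ^ (γ + 1) * (v ^ (γ + 1) - us ^ (γ + 1)) * (J₀ / b₀ - v)) v := fun v hv =>
    funext hH ▸ EulerPoisson.hasDerivAt_integral_of_continuousOn isOpen_Ioi
      (EulerPoisson.continuousOn_potential_integrand γ J₀ b₀ _ (by linarith)) hus0 hv
  have hF : ∀ x ∈ Set.Icc 0 T,
      HasDerivWithinAt (fun x => 1 / 2 * E x ^ 2 - H (u x)) 0 (Set.Icc 0 T) x := by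
    intro x hx
    have hux0 : 0 < u x := hus0.trans (hsup x hx)
    have hsuper : u x ^ (γ + 1) ≠ us ^ (γ + 1) :=
      (rpow_lt_rpow hus0.le (hsup x hx) (by linarith)).ne'
    refine ((((hE' x hx).pow 2).const_mul (1 / 2)).sub
      ((hH' _ hux0).comp_hasDerivWithinAt x (hu' x hx))).congr_deriv ?_
    rw [← hsonic, EulerPoisson.potential_integrand_mul_flow hb.ne' hux0 hsuper]
    ring
  intro x hx
  have hconst := (convex_Icc 0 T).norm_image_sub_le_of_norm_hasDerivWithin_le hF
    (fun _ _ => norm_zero.le) (Set.left_mem_Icc.2 (hx.1.trans hx.2)) hx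
  simpa [sub_eq_zero] using hconst

/-- First integral of the 1-D Euler–Poisson ODE system: along any `C¹` supersonic solution
`(u,E)` of `u' = u^γ E/(u^{γ+1} - γ J₀^{γ-1})`, `E' = J₀/u - b₀` on `[0,T]`, the quantity
`(1/2)E² - H(u)` is constant, where
`H(u) = ∫_{u_s}^{u} (b₀/t^{γ+1})(t^{γ+1} - u_s^{γ+1})(J₀/b₀ - t) dt`. -/
theorem euler_poisson_first_integral (γ J₀ b₀ T : ℝ) (hγ : 1 ≤ γ) (hJ : 0 < J₀)
    (hb : 0 < b₀) (hT : 0 < T)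
    (us : ℝ) (hus : us = J₀ / (J₀ ^ 2 / γ) ^ (1 / (γ + 1)))
    (H : ℝ → ℝ)
    (hH : ∀ v : ℝ, H v =
      ∫ t in us..v, (b₀ / t ^ (γ + 1)) * (t ^ (γ + 1) - us ^ (γ + 1)) * (J₀ / b₀ - t))
    (u E : ℝ → ℝ)
    (hu' : ∀ x ∈ Set.Icc 0 T,
      HasDerivWithinAt u ((u x) ^ γ * E x / ((u x) ^ (γ + 1) - γ * J₀ ^ (γ - 1)))
        (Set.Icc 0 T) x)
    (hE' : ∀ x ∈ Set.Icc 0 T,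
      HasDerivWithinAt E (J₀ / u x - b₀) (Set.Icc 0 T) x)
    (hsup : ∀ x ∈ Set.Icc 0 T, us < u x) :
    ∀ x ∈ Set.Icc (0 : ℝ) T,
      (1 / 2) * (E x) ^ 2 - H (u x) = (1 / 2) * (E 0) ^ 2 - H (u 0) :=
  euler_poisson_first_integral_general γ J₀ b₀ T hγ hJ hb us hus H hH u E hu' hE' hsup
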